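/- Positive eigenvalue bounds for the approximately preconditioned matrix: define u(λ) = λ³ + (β₁ − α₀)λ² − (α₀β₁ + α₁α₂/(1 + η_E) + β₀β₁)λ + α₀α₁α₂/(1 + η_E) and v(λ) = λ³ − (β₀ + β₂)λ² + (β₀β₂ − β₀β₁ − β₁β₂)λ + 2β₀β₁β₂. Let ρ_u > 0 satisfy u(ρ_u) = 0 with u(t) ≠ 0 for all 0 < t < ρ_u (the smallest positive root of u), and let ρ_v satisfy v(ρ_v) = 0 with every real root t of v satisfying t ≤ ρ_v (the largest real root of v). Then every positive eigenvalue λ of M̃⁻¹K satisfies ρ_u ≤ λ ≤ ρ_v. -/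

import Mathlib

/-!
Write an eigenvector as `(x, y, z)` and test the three block rows of `K v = λ M̃ v` against
`x`, `y`, `z`. This gives three scalar identities between quadratic forms, which are linked by
the spectral equivalences and by Cauchy–Schwarz in the inner products of `A` and `S₁`:
`(yᵀBx)² ≤ xᵀAx · yᵀBA⁻¹Bᵀy` and `(zᵀCy)² ≤ yᵀS₁y · zᵀCS₁⁻¹Cᵀz`.

For `λ > max β₀ β₂` they combine to `λ(λ - β₀)(λ - β₂) ≤ β₀β₁(λ - β₂) + β₁β₂(λ - β₀)`, that is
`v(λ) ≤ 0`, so `v` has a root `≥ λ`. For `λ < α₀` the matrix `A - λÃ` is positive definite and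
`x` can be eliminated: `(λS̃₁ + D + B(A - λÃ)⁻¹Bᵀ) y = Cᵀz`. Cauchy–Schwarz for this Schur
complement, tested against `S₁⁻¹Cᵀz`, yields `α₂ ≤ (1 + η_E)(λ/α₁ + α₀/(α₀ - λ))λ`, which forces
`u(λ) ≤ 0`; as `u(0) > 0`, `u` has a root in `(0, λ]`. The remaining ranges of `λ` are covered by
`u(α₀) ≤ 0` and `v(max β₀ β₂) ≤ 0`.
-/

open Matrix Filter

section QuadraticForms

variable {ι κ : Type*} [Fintype ι] [Fintype κ]

lemma Matrix.IsHermitian.dotProduct_mulVec_comm {P : Matrix ι ι ℝ} (hP : P.IsHermitian)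
    (x y : ι → ℝ) : x ⬝ᵥ P *ᵥ y = y ⬝ᵥ P *ᵥ x := by
  conv_lhs => rw [← hP.eq, conjTranspose_eq_transpose_of_trivial]
  exact dotProduct_transpose_mulVec P x y

lemma Matrix.PosSemidef.dotProduct_mulVec_self_nonneg {P : Matrix ι ι ℝ} (hP : P.PosSemidef)
    (x : ι → ℝ) : 0 ≤ x ⬝ᵥ P *ᵥ x := by
  simpa using hP.dotProduct_mulVec_nonneg x

lemma Matrix.PosDef.dotProduct_mulVec_self_pos {P : Matrix ι ι ℝ} (hP : P.PosDef)
    {x : ι → ℝ} (hx : x ≠ 0) : 0 < x ⬝ᵥ P *ᵥ x := by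
  simpa using hP.dotProduct_mulVec_pos hx

lemma Matrix.PosSemidef.sq_dotProduct_mulVec_le {P : Matrix ι ι ℝ} (hP : P.PosSemidef)
    (x y : ι → ℝ) : (x ⬝ᵥ P *ᵥ y) ^ 2 ≤ (x ⬝ᵥ P *ᵥ x) * (y ⬝ᵥ P *ᵥ y) := by
  classical
  have h := (toBilin' P).apply_mul_apply_le_of_forall_zero_le
    (fun v => by simpa only [toBilin'_apply'] using hP.dotProduct_mulVec_self_nonneg v) x y
  simp only [toBilin'_apply'] at h
  rwa [hP.1.dotProduct_mulVec_comm y x, ← sq] at h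

lemma Matrix.dotProduct_mul_mul_transpose_mulVec (B : Matrix κ ι ℝ) (P : Matrix ι ι ℝ)
    (y : κ → ℝ) : y ⬝ᵥ (B * P * Bᵀ) *ᵥ y = (Bᵀ *ᵥ y) ⬝ᵥ P *ᵥ (Bᵀ *ᵥ y) := by
  rw [← mulVec_mulVec, ← mulVec_mulVec, ← dotProduct_transpose_mulVec, dotProduct_comm]

lemma Matrix.PosDef.sub_smul_of_le {A T : Matrix ι ι ℝ} (hA : A.PosDef) (hT : T.IsHermitian)
    {α lam : ℝ} (hle : ∀ x, α * (x ⬝ᵥ T *ᵥ x) ≤ x ⬝ᵥ A *ᵥ x) (hlam : 0 ≤ lam)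
    (hlamα : lam < α) : (A - lam • T).PosDef := by
  refine .of_dotProduct_mulVec_pos (hA.1.sub (hT.smul (IsSelfAdjoint.all lam))) fun x hx => ?_
  have ha := hA.dotProduct_mulVec_self_pos hx
  have := hle x
  simp only [star_trivial, sub_mulVec, smul_mulVec, dotProduct_sub, dotProduct_smul, smul_eq_mul]
  nlinarith

variable [DecidableEq ι]

lemma Matrix.PosDef.mulVec_inv_mulVec {P : Matrix ι ι ℝ} (hP : P.PosDef) (v : ι → ℝ) :
    P *ᵥ (P⁻¹ *ᵥ v) = v := by
  rw [mulVec_mulVec, mul_nonsing_inv _ ((isUnit_iff_isUnit_det P).mp hP.isUnit), one_mulVec]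

lemma Matrix.PosDef.inv_mulVec_mulVec {P : Matrix ι ι ℝ} (hP : P.PosDef) (v : ι → ℝ) :
    P⁻¹ *ᵥ (P *ᵥ v) = v := by
  rw [mulVec_mulVec, nonsing_inv_mul _ ((isUnit_iff_isUnit_det P).mp hP.isUnit), one_mulVec]

lemma Matrix.PosDef.sq_dotProduct_le_mul_inv {P : Matrix ι ι ℝ} (hP : P.PosDef) (x u : ι → ℝ) :
    (x ⬝ᵥ u) ^ 2 ≤ (x ⬝ᵥ P *ᵥ x) * (u ⬝ᵥ P⁻¹ *ᵥ u) := by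
  have h := hP.posSemidef.sq_dotProduct_mulVec_le x (P⁻¹ *ᵥ u)
  rwa [hP.mulVec_inv_mulVec, dotProduct_comm (P⁻¹ *ᵥ u)] at h

lemma Matrix.PosDef.dotProduct_inv_mulVec_le {A N : Matrix ι ι ℝ} (hA : A.PosDef)
    (hN : N.PosDef) {κ : ℝ} (hκ : 0 ≤ κ) (hAN : ∀ u, u ⬝ᵥ A *ᵥ u ≤ κ * (u ⬝ᵥ N *ᵥ u))
    (v : ι → ℝ) : v ⬝ᵥ N⁻¹ *ᵥ v ≤ κ * (v ⬝ᵥ A⁻¹ *ᵥ v) := by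
  -- Cauchy–Schwarz in the `A`-inner product for `N⁻¹ v` and `A⁻¹ v`.
  set g := N⁻¹ *ᵥ v
  have hg : g ⬝ᵥ N *ᵥ g = v ⬝ᵥ g := by rw [hN.mulVec_inv_mulVec, dotProduct_comm]
  have hcs := hA.sq_dotProduct_le_mul_inv g v
  have hg₀ : 0 ≤ v ⬝ᵥ g := hN.inv.posSemidef.dotProduct_mulVec_self_nonneg v
  have hv₀ : 0 ≤ v ⬝ᵥ A⁻¹ *ᵥ v := hA.inv.posSemidef.dotProduct_mulVec_self_nonneg v
  rw [dotProduct_comm g, sq] at hcs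
  have := mul_le_mul_of_nonneg_right (hAN g) hv₀
  rw [hg] at this
  rcases hg₀.eq_or_lt with h | h
  · rw [← h]; positivity
  · nlinarith

end QuadraticForms

lemma mul_le_of_mul_le_of_sq_le {k t b P : ℝ} (hk : 0 ≤ k) (hP : 0 ≤ P)
    (hkt : k * t ≤ b) (hb : b ^ 2 ≤ t * P) : k * b ≤ P := by
  rcases le_or_gt b 0 with h | h
  · nlinarith
  · nlinarith [mul_le_mul_of_nonneg_left hb hk, mul_le_mul_of_nonneg_right hkt hP]

noncomputable def lowerCubic (α₀ β₀ α₁ β₁ α₂ ηE t : ℝ) : ℝ :=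
  t ^ 3 + (β₁ - α₀) * t ^ 2 - (α₀ * β₁ + α₁ * α₂ / (1 + ηE) + β₀ * β₁) * t
    + α₀ * α₁ * α₂ / (1 + ηE)

def upperCubic (β₀ β₁ β₂ t : ℝ) : ℝ :=
  t ^ 3 - (β₀ + β₂) * t ^ 2 + (β₀ * β₂ - β₀ * β₁ - β₁ * β₂) * t + 2 * β₀ * β₁ * β₂

lemma smallest_pos_root_le {f : ℝ → ℝ} (hf : Continuous f) (h₀ : 0 < f 0) {ρ : ℝ}
    (hρ : ∀ s, 0 < s → s < ρ → f s ≠ 0) ⦃t : ℝ⦄ (ht : 0 < t) (hft : f t ≤ 0) : ρ ≤ t := by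
  by_contra! htρ
  obtain ⟨r, ⟨hr₀, hrt⟩, hr⟩ := intermediate_value_Icc' ht.le hf.continuousOn ⟨hft, h₀.le⟩
  have hr₀' : 0 < r := hr₀.lt_of_ne (by rintro rfl; exact h₀.ne' hr)
  exact hρ r hr₀' (hrt.trans_lt htρ) hr

lemma le_largest_root {f : ℝ → ℝ} (hf : Continuous f) (htop : Tendsto f atTop atTop) {ρ : ℝ}
    (hρ : ∀ s, f s = 0 → s ≤ ρ) ⦃t : ℝ⦄ (hft : f t ≤ 0) : t ≤ ρ := by
  obtain ⟨r, htr, hr⟩ := intermediate_value_Ici hf.continuousOn htop (Set.mem_Ici.mpr hft)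
  exact le_trans htr (hρ r hr)

lemma continuous_lowerCubic (α₀ β₀ α₁ β₁ α₂ ηE : ℝ) :
    Continuous (lowerCubic α₀ β₀ α₁ β₁ α₂ ηE) := by
  unfold lowerCubic; fun_prop

lemma continuous_upperCubic (β₀ β₁ β₂ : ℝ) : Continuous (upperCubic β₀ β₁ β₂) := by
  unfold upperCubic; fun_prop

open Polynomial in
lemma tendsto_upperCubic_atTop (β₀ β₁ β₂ : ℝ) :
    Tendsto (upperCubic β₀ β₁ β₂) atTop atTop := by
  have hdeg : (X ^ 3 - C (β₀ + β₂) * X ^ 2 + C (β₀ * β₂ - β₀ * β₁ - β₁ * β₂) * X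
      + C (2 * β₀ * β₁ * β₂) : ℝ[X]).natDegree = 3 := by compute_degree!
  have hmonic : (X ^ 3 - C (β₀ + β₂) * X ^ 2 + C (β₀ * β₂ - β₀ * β₁ - β₁ * β₂) * X
      + C (2 * β₀ * β₁ * β₂) : ℝ[X]).Monic := by monicity!
  convert tendsto_atTop_of_leadingCoeff_nonneg _
    (natDegree_pos_iff_degree_pos.mp (by omega)) (hmonic.leadingCoeff ▸ zero_le_one) using 1
  ext t
  simp [upperCubic]

lemma lowerCubic_zero_pos {α₀ β₀ α₁ β₁ α₂ ηE : ℝ} (hα₀ : 0 < α₀) (hα₁ : 0 < α₁) (hα₂ : 0 < α₂)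
    (hηE : 0 ≤ ηE) : 0 < lowerCubic α₀ β₀ α₁ β₁ α₂ ηE 0 := by
  simp only [lowerCubic]
  have : 0 < α₀ * α₁ * α₂ / (1 + ηE) := by positivity
  simpa using this

lemma lowerCubic_self_nonpos {α₀ β₀ α₁ β₁ α₂ ηE : ℝ} (hα₀ : 0 ≤ α₀) (hβ₀β₁ : 0 ≤ β₀ * β₁) :
    lowerCubic α₀ β₀ α₁ β₁ α₂ ηE α₀ ≤ 0 := by
  have : lowerCubic α₀ β₀ α₁ β₁ α₂ ηE α₀ = -(β₀ * β₁ * α₀) := by unfold lowerCubic; ring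
  rw [this, neg_nonpos]
  positivity

lemma lowerCubic_nonpos {α₀ β₀ α₁ β₁ α₂ ηE lam : ℝ} (hα₁ : 0 < α₁) (hβ₁ : 0 ≤ β₁)
    (hαβ : α₀ * α₁ ≤ β₀ * β₁) (hηE : 0 ≤ ηE) (hlam : 0 < lam) (hlamα₀ : lam < α₀)
    (h : α₂ ≤ (1 + ηE) * (lam / α₁ + α₀ / (α₀ - lam)) * lam) :
    lowerCubic α₀ β₀ α₁ β₁ α₂ ηE lam ≤ 0 := by
  have hα₀lam : 0 < α₀ - lam := by linarith
  have hηE' : 0 < 1 + ηE := by linarith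
  set γ := α₁ * α₂ / (1 + ηE)
  have hγ : γ * (α₀ - lam) ≤ lam * (lam * (α₀ - lam) + α₀ * α₁) := by
    have h' := mul_le_mul_of_nonneg_right h (mul_pos hα₁ hα₀lam).le
    have : (1 + ηE) * (lam / α₁ + α₀ / (α₀ - lam)) * lam * (α₁ * (α₀ - lam))
        = (1 + ηE) * (lam * (lam * (α₀ - lam) + α₀ * α₁)) := by
      field_simp
    rw [div_mul_eq_mul_div, div_le_iff₀ hηE']
    linarith
  have : lowerCubic α₀ β₀ α₁ β₁ α₂ ηE lam
      = lam ^ 2 * (lam - α₀) + β₁ * lam * (lam - α₀) - β₀ * β₁ * lam + γ * (α₀ - lam) := by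
    unfold lowerCubic; ring
  rw [this]
  nlinarith [mul_nonneg hβ₁ (mul_nonneg hlam.le hα₀lam.le)]

lemma upperCubic_max_nonpos {β₀ β₁ β₂ : ℝ} (hβ₀ : 0 ≤ β₀) (hβ₁ : 0 ≤ β₁) (hβ₂ : 0 ≤ β₂) :
    upperCubic β₀ β₁ β₂ (max β₀ β₂) ≤ 0 := by
  rcases le_total β₀ β₂ with h | h
  · rw [max_eq_right h]
    have : upperCubic β₀ β₁ β₂ β₂ = -(β₁ * β₂ * (β₂ - β₀)) := by unfold upperCubic; ring
    rw [this, neg_nonpos]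
    exact mul_nonneg (mul_nonneg hβ₁ hβ₂) (sub_nonneg.mpr h)
  · rw [max_eq_left h]
    have : upperCubic β₀ β₁ β₂ β₀ = -(β₀ * β₁ * (β₀ - β₂)) := by unfold upperCubic; ring
    rw [this, neg_nonpos]
    exact mul_nonneg (mul_nonneg hβ₀ hβ₁) (sub_nonneg.mpr h)

lemma upperCubic_nonpos {β₀ β₁ β₂ lam t b c : ℝ} (hβ₀ : β₀ < lam) (hβ₂ : β₂ < lam) (ht : 0 < t)
    (hb : (lam - β₀) * b ≤ β₀ * β₁ * t) (hc : (lam - β₂) * c ≤ β₁ * β₂ * t)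
    (hbc : lam * t ≤ b + c) : upperCubic β₀ β₁ β₂ lam ≤ 0 := by
  have key : upperCubic β₀ β₁ β₂ lam * t ≤ 0 := by
    have h₀ := mul_le_mul_of_nonneg_left hbc
      (mul_nonneg (sub_pos.mpr hβ₀).le (sub_pos.mpr hβ₂).le)
    unfold upperCubic
    nlinarith [mul_le_mul_of_nonneg_left hb (sub_pos.mpr hβ₂).le,
      mul_le_mul_of_nonneg_left hc (sub_pos.mpr hβ₀).le]
  exact nonpos_of_mul_nonpos_left key ht

section SaddlePoint

variable {ι κ μ : Type*} [Fintype ι] [Fintype κ] [Fintype μ]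
  {A Atil : Matrix ι ι ℝ} {B : Matrix κ ι ℝ} {C : Matrix μ κ ℝ} {D S₁ S₁til : Matrix κ κ ℝ}
  {E S₂ S₂til : Matrix μ μ ℝ} {x : ι → ℝ} {y : κ → ℝ} {z : μ → ℝ} {lam : ℝ}

lemma eigen_block_rows
    (h : fromBlocks (fromBlocks A Bᵀ B (-D)) (fromRows 0 Cᵀ) (fromCols 0 C) E *ᵥ
        Sum.elim (Sum.elim x y) z =
      lam • fromBlocks (fromBlocks Atil 0 0 S₁til) 0 0 S₂til *ᵥ Sum.elim (Sum.elim x y) z) :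
    A *ᵥ x + Bᵀ *ᵥ y = lam • Atil *ᵥ x ∧ B *ᵥ x - D *ᵥ y + Cᵀ *ᵥ z = lam • S₁til *ᵥ y ∧
      C *ᵥ y + E *ᵥ z = lam • S₂til *ᵥ z := by
  simp only [fromBlocks_mulVec, fromRows_mulVec, fromCols_mulVec_sumElim, Sum.elim_comp_inl,
    Sum.elim_comp_inr, zero_mulVec, add_zero, zero_add, neg_mulVec] at h
  refine ⟨funext fun i => ?_, funext fun i => ?_, funext fun i => ?_⟩
  · simpa using congrFun h (.inl (.inl i))
  · simpa [sub_eq_add_neg, add_assoc] using congrFun h (.inl (.inr i))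
  · simpa using congrFun h (.inr i)

lemma dotProduct_eigen_block_rows (h₁ : A *ᵥ x + Bᵀ *ᵥ y = lam • Atil *ᵥ x)
    (h₂ : B *ᵥ x - D *ᵥ y + Cᵀ *ᵥ z = lam • S₁til *ᵥ y) (h₃ : C *ᵥ y + E *ᵥ z = lam • S₂til *ᵥ z) :
    x ⬝ᵥ A *ᵥ x + y ⬝ᵥ B *ᵥ x = lam * (x ⬝ᵥ Atil *ᵥ x) ∧
      y ⬝ᵥ B *ᵥ x - y ⬝ᵥ D *ᵥ y + z ⬝ᵥ C *ᵥ y = lam * (y ⬝ᵥ S₁til *ᵥ y) ∧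
      z ⬝ᵥ C *ᵥ y + z ⬝ᵥ E *ᵥ z = lam * (z ⬝ᵥ S₂til *ᵥ z) := by
  refine ⟨?_, ?_, ?_⟩
  · simpa only [dotProduct_add, dotProduct_smul, smul_eq_mul, dotProduct_transpose_mulVec]
      using congrArg (x ⬝ᵥ ·) h₁
  · simpa only [dotProduct_add, dotProduct_sub, dotProduct_smul, smul_eq_mul,
      dotProduct_transpose_mulVec] using congrArg (y ⬝ᵥ ·) h₂
  · simpa only [dotProduct_add, dotProduct_smul, smul_eq_mul] using congrArg (z ⬝ᵥ ·) h₃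

lemma add_add_pos_of_sumElim_ne_zero (hAtil : Atil.PosDef) (hS₁til : S₁til.PosDef)
    (hS₂til : S₂til.PosDef) (h : Sum.elim (Sum.elim x y) z ≠ 0) :
    0 < x ⬝ᵥ Atil *ᵥ x + y ⬝ᵥ S₁til *ᵥ y + z ⬝ᵥ S₂til *ᵥ z := by
  have hx := hAtil.posSemidef.dotProduct_mulVec_self_nonneg x
  have hy := hS₁til.posSemidef.dotProduct_mulVec_self_nonneg y
  have hz := hS₂til.posSemidef.dotProduct_mulVec_self_nonneg z
  have hxyz : x ≠ 0 ∨ y ≠ 0 ∨ z ≠ 0 := by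
    contrapose! h
    simp [h.1, h.2.1, h.2.2]
  rcases hxyz with hx' | hy' | hz'
  · linarith [hAtil.dotProduct_mulVec_self_pos hx']
  · linarith [hS₁til.dotProduct_mulVec_self_pos hy']
  · linarith [hS₂til.dotProduct_mulVec_self_pos hz']

lemma dotProduct_mulVec_of_eq_add_mul_mul_transpose {P : Matrix ι ι ℝ}
    (hS₁ : S₁ = D + B * P * Bᵀ) (y : κ → ℝ) :
    y ⬝ᵥ S₁ *ᵥ y = y ⬝ᵥ D *ᵥ y + (Bᵀ *ᵥ y) ⬝ᵥ P *ᵥ (Bᵀ *ᵥ y) := by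
  rw [hS₁, add_mulVec, dotProduct_add, dotProduct_mul_mul_transpose_mulVec]

lemma dotProduct_schur_le {P Q : Matrix ι ι ℝ} {k α₁ : ℝ} (hD : D.PosSemidef)
    (hS₁ : S₁ = D + B * Q * Bᵀ) (hPQ : ∀ v, v ⬝ᵥ P *ᵥ v ≤ k * (v ⬝ᵥ Q *ᵥ v)) (hk : 1 ≤ k)
    (hS₁_ge : ∀ y, α₁ * (y ⬝ᵥ S₁til *ᵥ y) ≤ y ⬝ᵥ S₁ *ᵥ y) (hα₁ : 0 < α₁) (hlam : 0 ≤ lam)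
    (g : κ → ℝ) :
    g ⬝ᵥ (lam • S₁til + D + B * P * Bᵀ) *ᵥ g ≤ (lam / α₁ + k) * (g ⬝ᵥ S₁ *ᵥ g) := by
  rw [dotProduct_mulVec_of_eq_add_mul_mul_transpose rfl, add_mulVec, dotProduct_add, smul_mulVec,
    dotProduct_smul, smul_eq_mul, dotProduct_mulVec_of_eq_add_mul_mul_transpose hS₁]
  have hS₁til_le : lam * (g ⬝ᵥ S₁til *ᵥ g) ≤ lam / α₁ * (g ⬝ᵥ S₁ *ᵥ g) := by
    rw [div_mul_eq_mul_div, le_div_iff₀ hα₁]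
    nlinarith [mul_le_mul_of_nonneg_left (hS₁_ge g) hlam]
  rw [dotProduct_mulVec_of_eq_add_mul_mul_transpose hS₁] at hS₁til_le
  nlinarith [hPQ (Bᵀ *ᵥ g), hD.dotProduct_mulVec_self_nonneg g]

variable [DecidableEq ι]

lemma schur_mulVec_eq (hN : (A - lam • Atil).PosDef) (h₁ : A *ᵥ x + Bᵀ *ᵥ y = lam • Atil *ᵥ x)
    (h₂ : B *ᵥ x - D *ᵥ y + Cᵀ *ᵥ z = lam • S₁til *ᵥ y) :
    (lam • S₁til + D + B * (A - lam • Atil)⁻¹ * Bᵀ) *ᵥ y = Cᵀ *ᵥ z := by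
  have hNx : (A - lam • Atil) *ᵥ x = -(Bᵀ *ᵥ y) := by
    rw [sub_mulVec, smul_mulVec, ← h₁]
    abel
  have hx : x = -((A - lam • Atil)⁻¹ *ᵥ (Bᵀ *ᵥ y)) := by
    rw [← mulVec_neg, ← hNx, hN.inv_mulVec_mulVec]
  rw [add_mulVec, add_mulVec, smul_mulVec, ← mulVec_mulVec, ← mulVec_mulVec, ← h₂, hx,
    mulVec_neg]
  abel

variable [DecidableEq κ]

lemma upperCubic_nonpos_of_eigen {β₀ β₁ β₂ : ℝ} (hA : A.PosDef) (hD : D.PosSemidef)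
    (hE : E.PosSemidef) (hS₁ : S₁ = D + B * A⁻¹ * Bᵀ) (hS₂ : S₂ = E + C * S₁⁻¹ * Cᵀ)
    (hS₁pd : S₁.PosDef) (hAtil : Atil.PosSemidef) (hS₂til : S₂til.PosSemidef)
    (hA_le : ∀ x, x ⬝ᵥ A *ᵥ x ≤ β₀ * (x ⬝ᵥ Atil *ᵥ x))
    (hS₁_le : ∀ y, y ⬝ᵥ S₁ *ᵥ y ≤ β₁ * (y ⬝ᵥ S₁til *ᵥ y))
    (hS₂_le : ∀ z, z ⬝ᵥ S₂ *ᵥ z ≤ β₂ * (z ⬝ᵥ S₂til *ᵥ z)) (hβ₀ : 0 ≤ β₀) (hβ₁ : 0 ≤ β₁)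
    (hβ₂ : 0 ≤ β₂) (h₁ : A *ᵥ x + Bᵀ *ᵥ y = lam • Atil *ᵥ x)
    (h₂ : B *ᵥ x - D *ᵥ y + Cᵀ *ᵥ z = lam • S₁til *ᵥ y) (h₃ : C *ᵥ y + E *ᵥ z = lam • S₂til *ᵥ z)
    (hpos : 0 < x ⬝ᵥ Atil *ᵥ x + y ⬝ᵥ S₁til *ᵥ y + z ⬝ᵥ S₂til *ᵥ z)
    (hlam₀ : β₀ < lam) (hlam₂ : β₂ < lam) : upperCubic β₀ β₁ β₂ lam ≤ 0 := by
  obtain ⟨e₁, e₂, e₃⟩ := dotProduct_eigen_block_rows h₁ h₂ h₃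
  have hs₁ := dotProduct_mulVec_of_eq_add_mul_mul_transpose hS₁ y
  have hs₂ := dotProduct_mulVec_of_eq_add_mul_mul_transpose hS₂ z
  have hb_sq := hA.sq_dotProduct_le_mul_inv x (Bᵀ *ᵥ y)
  have hc_sq := hS₁pd.sq_dotProduct_le_mul_inv y (Cᵀ *ᵥ z)
  rw [dotProduct_transpose_mulVec] at hb_sq hc_sq
  have hq₀ := hA.inv.posSemidef.dotProduct_mulVec_self_nonneg (Bᵀ *ᵥ y)
  have hw₀ := hS₁pd.inv.posSemidef.dotProduct_mulVec_self_nonneg (Cᵀ *ᵥ z)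
  have hs₁₀ := hS₁pd.posSemidef.dotProduct_mulVec_self_nonneg y
  have hd₀ := hD.dotProduct_mulVec_self_nonneg y
  have he₀ := hE.dotProduct_mulVec_self_nonneg z
  have hta₀ := hAtil.dotProduct_mulVec_self_nonneg x
  have ht₂₀ := hS₂til.dotProduct_mulVec_self_nonneg z
  have hb₁ : (lam - β₀) * (x ⬝ᵥ Atil *ᵥ x) ≤ y ⬝ᵥ B *ᵥ x := by linarith [hA_le x]
  have hc₁ : (lam - β₂) * (z ⬝ᵥ S₂til *ᵥ z) ≤ z ⬝ᵥ C *ᵥ y := by linarith [hS₂_le z]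
  have hb₂ := mul_le_of_mul_le_of_sq_le (sub_pos.mpr hlam₀).le (mul_nonneg hβ₀ hq₀) hb₁
    (by nlinarith [mul_le_mul_of_nonneg_right (hA_le x) hq₀])
  have hc₂ := mul_le_of_mul_le_of_sq_le (sub_pos.mpr hlam₂).le (mul_nonneg hβ₂ hs₁₀) hc₁
    (by nlinarith [mul_le_mul_of_nonneg_left (hS₂_le z) hs₁₀])
  have hq_le : (Bᵀ *ᵥ y) ⬝ᵥ A⁻¹ *ᵥ (Bᵀ *ᵥ y) ≤ β₁ * (y ⬝ᵥ S₁til *ᵥ y) := by linarith [hS₁_le y]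
  -- If `yᵀS̃₁y = 0`, the two coupling bounds force `xᵀÃx = zᵀS̃₂z = 0` as well.
  have ht₁ : 0 < y ⬝ᵥ S₁til *ᵥ y := by
    by_contra! ht₁
    have hs₁0 := (hS₁_le y).trans (mul_nonpos_of_nonneg_of_nonpos hβ₁ ht₁)
    have hq0 : (Bᵀ *ᵥ y) ⬝ᵥ A⁻¹ *ᵥ (Bᵀ *ᵥ y) = 0 := by linarith
    rw [hq0, mul_zero] at hb₂
    have hta : x ⬝ᵥ Atil *ᵥ x ≤ 0 := by nlinarith
    have ht₂ : z ⬝ᵥ S₂til *ᵥ z ≤ 0 := by nlinarith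
    linarith
  refine upperCubic_nonpos (b := y ⬝ᵥ B *ᵥ x) (c := z ⬝ᵥ C *ᵥ y) hlam₀ hlam₂ ht₁ ?_ ?_
    (by linarith)
  · nlinarith [mul_le_mul_of_nonneg_left hq_le hβ₀]
  · nlinarith [mul_le_mul_of_nonneg_left (hS₁_le y) hβ₂]

lemma dotProduct_inv_mulVec_le_mul_coupling {α₀ α₁ : ℝ} (hA : A.PosDef)
    (hAtil : Atil.IsHermitian) (hD : D.PosSemidef) (hS₁ : S₁ = D + B * A⁻¹ * Bᵀ) (hS₁pd : S₁.PosDef)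
    (hS₁til : S₁til.PosSemidef) (hA_ge : ∀ x, α₀ * (x ⬝ᵥ Atil *ᵥ x) ≤ x ⬝ᵥ A *ᵥ x)
    (hS₁_ge : ∀ y, α₁ * (y ⬝ᵥ S₁til *ᵥ y) ≤ y ⬝ᵥ S₁ *ᵥ y) (hα₁ : 0 < α₁) (hlam : 0 ≤ lam)
    (hlamα₀ : lam < α₀) (h₁ : A *ᵥ x + Bᵀ *ᵥ y = lam • Atil *ᵥ x)
    (h₂ : B *ᵥ x - D *ᵥ y + Cᵀ *ᵥ z = lam • S₁til *ᵥ y) :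
    (Cᵀ *ᵥ z) ⬝ᵥ S₁⁻¹ *ᵥ (Cᵀ *ᵥ z) ≤ (lam / α₁ + α₀ / (α₀ - lam)) * (z ⬝ᵥ C *ᵥ y) := by
  have hα₀lam : 0 < α₀ - lam := sub_pos.mpr hlamα₀
  have hN := hA.sub_smul_of_le hAtil hA_ge hlam hlamα₀
  have hAN : ∀ u, u ⬝ᵥ A *ᵥ u ≤ α₀ / (α₀ - lam) * (u ⬝ᵥ (A - lam • Atil) *ᵥ u) := by
    intro u
    rw [div_mul_eq_mul_div, le_div_iff₀ hα₀lam, sub_mulVec, smul_mulVec, dotProduct_sub,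
      dotProduct_smul, smul_eq_mul]
    nlinarith [mul_le_mul_of_nonneg_left (hA_ge u) hlam]
  have hk : 1 ≤ α₀ / (α₀ - lam) := by rw [le_div_iff₀ hα₀lam]; linarith
  have hM : (lam • S₁til + D + B * (A - lam • Atil)⁻¹ * Bᵀ).PosSemidef := by
    refine ((hS₁til.smul hlam).add hD).add ?_
    simpa using hN.inv.posSemidef.mul_mul_conjTranspose_same B
  have hMy := schur_mulVec_eq hN h₁ h₂
  set g := S₁⁻¹ *ᵥ (Cᵀ *ᵥ z)
  have hgMg := dotProduct_schur_le hD hS₁ (hA.dotProduct_inv_mulVec_le hN (by positivity) hAN)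
    hk hS₁_ge hα₁ hlam g
  have hcs := hM.sq_dotProduct_mulVec_le g y
  rw [hS₁pd.mulVec_inv_mulVec, dotProduct_comm g (Cᵀ *ᵥ z)] at hgMg
  rw [hMy, dotProduct_comm g, dotProduct_transpose_mulVec] at hcs
  have hw₀ := hS₁pd.inv.posSemidef.dotProduct_mulVec_self_nonneg (Cᵀ *ᵥ z)
  have hc₀ : 0 ≤ z ⬝ᵥ C *ᵥ y := by
    rw [← dotProduct_transpose_mulVec, ← hMy]
    exact hM.dotProduct_mulVec_self_nonneg y
  have hτ : 0 ≤ lam / α₁ + α₀ / (α₀ - lam) :=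
    add_nonneg (div_nonneg hlam hα₁.le) (div_nonneg (hlam.trans_lt hlamα₀).le hα₀lam.le)
  rcases hw₀.eq_or_lt with hw | hw
  · rw [← hw]; positivity
  · nlinarith [mul_le_mul_of_nonneg_right hgMg hc₀]

lemma lowerCubic_nonpos_of_eigen {α₀ β₀ α₁ β₁ α₂ ηE : ℝ} (hA : A.PosDef) (hD : D.PosSemidef)
    (hE : E.PosSemidef) (hS₁ : S₁ = D + B * A⁻¹ * Bᵀ) (hS₂ : S₂ = E + C * S₁⁻¹ * Cᵀ)
    (hS₁pd : S₁.PosDef) (hAtil : Atil.PosSemidef) (hS₁til : S₁til.PosSemidef)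
    (hA_ge : ∀ x, α₀ * (x ⬝ᵥ Atil *ᵥ x) ≤ x ⬝ᵥ A *ᵥ x)
    (hS₁_ge : ∀ y, α₁ * (y ⬝ᵥ S₁til *ᵥ y) ≤ y ⬝ᵥ S₁ *ᵥ y)
    (hS₂_ge : ∀ z, α₂ * (z ⬝ᵥ S₂til *ᵥ z) ≤ z ⬝ᵥ S₂ *ᵥ z)
    (hηE : ∀ z, z ⬝ᵥ E *ᵥ z ≤ ηE * (z ⬝ᵥ (C * S₁⁻¹ * Cᵀ) *ᵥ z)) (hηE₀ : 0 ≤ ηE)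
    (hα₁ : 0 < α₁) (hβ₁ : 0 ≤ β₁) (hαβ : α₀ * α₁ ≤ β₀ * β₁)
    (h₁ : A *ᵥ x + Bᵀ *ᵥ y = lam • Atil *ᵥ x)
    (h₂ : B *ᵥ x - D *ᵥ y + Cᵀ *ᵥ z = lam • S₁til *ᵥ y) (h₃ : C *ᵥ y + E *ᵥ z = lam • S₂til *ᵥ z)
    (hpos : 0 < x ⬝ᵥ Atil *ᵥ x + y ⬝ᵥ S₁til *ᵥ y + z ⬝ᵥ S₂til *ᵥ z)
    (hlam : 0 < lam) (hlamα₀ : lam < α₀) : lowerCubic α₀ β₀ α₁ β₁ α₂ ηE lam ≤ 0 := by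
  refine lowerCubic_nonpos hα₁ hβ₁ hαβ hηE₀ hlam hlamα₀ ?_
  obtain ⟨e₁, e₂, e₃⟩ := dotProduct_eigen_block_rows h₁ h₂ h₃
  have hwc := dotProduct_inv_mulVec_le_mul_coupling hA hAtil.1 hD hS₁ hS₁pd hS₁til hA_ge hS₁_ge
    hα₁ hlam.le hlamα₀ h₁ h₂
  have hs₂ := dotProduct_mulVec_of_eq_add_mul_mul_transpose hS₂ z
  have hew := hηE z
  rw [dotProduct_mul_mul_transpose_mulVec] at hew
  have hc_ge : lam * (y ⬝ᵥ S₁til *ᵥ y) + (α₀ - lam) * (x ⬝ᵥ Atil *ᵥ x) ≤ z ⬝ᵥ C *ᵥ y := by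
    linarith [hA_ge x, hD.dotProduct_mulVec_self_nonneg y]
  have hc_le : z ⬝ᵥ C *ᵥ y ≤ lam * (z ⬝ᵥ S₂til *ᵥ z) := by
    linarith [hE.dotProduct_mulVec_self_nonneg z]
  have hα₀lam : 0 < α₀ - lam := sub_pos.mpr hlamα₀
  have ht₂ : 0 < z ⬝ᵥ S₂til *ᵥ z := by
    by_contra! ht₂
    have hta := mul_nonneg hα₀lam.le (hAtil.dotProduct_mulVec_self_nonneg x)
    have ht₁ := mul_nonneg hlam.le (hS₁til.dotProduct_mulVec_self_nonneg y)
    have hc := hc_le.trans (mul_nonpos_of_nonneg_of_nonpos hlam.le ht₂)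
    linarith [nonpos_of_mul_nonpos_right (by linarith : lam * (y ⬝ᵥ S₁til *ᵥ y) ≤ 0) hlam,
      nonpos_of_mul_nonpos_right (by linarith : (α₀ - lam) * (x ⬝ᵥ Atil *ᵥ x) ≤ 0) hα₀lam]
  have hτ : 0 ≤ lam / α₁ + α₀ / (α₀ - lam) :=
    add_nonneg (div_nonneg hlam.le hα₁.le) (div_nonneg (hlam.trans hlamα₀).le hα₀lam.le)
  refine le_of_mul_le_mul_right ?_ ht₂
  calc α₂ * (z ⬝ᵥ S₂til *ᵥ z) ≤ (1 + ηE) * ((Cᵀ *ᵥ z) ⬝ᵥ S₁⁻¹ *ᵥ (Cᵀ *ᵥ z)) := by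
        linarith [hS₂_ge z]
    _ ≤ (1 + ηE) * ((lam / α₁ + α₀ / (α₀ - lam)) * (z ⬝ᵥ C *ᵥ y)) := by gcongr
    _ ≤ (1 + ηE) * ((lam / α₁ + α₀ / (α₀ - lam)) * (lam * (z ⬝ᵥ S₂til *ᵥ z))) := by gcongr
    _ = (1 + ηE) * (lam / α₁ + α₀ / (α₀ - lam)) * lam * (z ⬝ᵥ S₂til *ᵥ z) := by ring

end SaddlePoint

theorem stmt_19_general (n m p : ℕ)
    (A : Matrix (Fin n) (Fin n) ℝ) (B : Matrix (Fin m) (Fin n) ℝ)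
    (C : Matrix (Fin p) (Fin m) ℝ) (D : Matrix (Fin m) (Fin m) ℝ)
    (E : Matrix (Fin p) (Fin p) ℝ)
    (hA : A.PosDef) (hD : D.PosSemidef) (hE : E.PosSemidef)
    (S₁ : Matrix (Fin m) (Fin m) ℝ) (hS₁ : S₁ = D + B * A⁻¹ * Bᵀ)
    (S₂ : Matrix (Fin p) (Fin p) ℝ) (hS₂ : S₂ = E + C * S₁⁻¹ * Cᵀ)
    (hS₁pd : S₁.PosDef)
    (Atil : Matrix (Fin n) (Fin n) ℝ) (S₁til : Matrix (Fin m) (Fin m) ℝ)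
    (S₂til : Matrix (Fin p) (Fin p) ℝ)
    (hAtil : Atil.PosDef) (hS₁til : S₁til.PosDef) (hS₂til : S₂til.PosDef)
    (α₀ β₀ α₁ β₁ α₂ β₂ : ℝ)
    (hα₀ : 0 < α₀) (hα₀1 : α₀ ≤ 1) (hβ₀ : 1 ≤ β₀)
    (hα₁ : 0 < α₁) (hα₁1 : α₁ ≤ 1) (hβ₁ : 1 ≤ β₁)
    (hα₂ : 0 < α₂) (hβ₂ : 1 ≤ β₂)
    (hAequiv : ∀ x : Fin n → ℝ,
      α₀ * (x ⬝ᵥ Atil.mulVec x) ≤ x ⬝ᵥ A.mulVec x ∧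
      x ⬝ᵥ A.mulVec x ≤ β₀ * (x ⬝ᵥ Atil.mulVec x))
    (hS₁equiv : ∀ y : Fin m → ℝ,
      α₁ * (y ⬝ᵥ S₁til.mulVec y) ≤ y ⬝ᵥ S₁.mulVec y ∧
      y ⬝ᵥ S₁.mulVec y ≤ β₁ * (y ⬝ᵥ S₁til.mulVec y))
    (hS₂equiv : ∀ z : Fin p → ℝ,
      α₂ * (z ⬝ᵥ S₂til.mulVec z) ≤ z ⬝ᵥ S₂.mulVec z ∧
      z ⬝ᵥ S₂.mulVec z ≤ β₂ * (z ⬝ᵥ S₂til.mulVec z))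
    (ηE : ℝ) (hηE0 : 0 ≤ ηE)
    (hηE : ∀ z : Fin p → ℝ, z ⬝ᵥ E.mulVec z ≤ ηE * (z ⬝ᵥ (C * S₁⁻¹ * Cᵀ).mulVec z))
    (K : Matrix ((Fin n ⊕ Fin m) ⊕ Fin p) ((Fin n ⊕ Fin m) ⊕ Fin p) ℝ)
    (hK : K = fromBlocks (fromBlocks A Bᵀ B (-D)) (fromRows 0 Cᵀ) (fromCols 0 C) E)
    (Mtil : Matrix ((Fin n ⊕ Fin m) ⊕ Fin p) ((Fin n ⊕ Fin m) ⊕ Fin p) ℝ)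
    (hMtil : Mtil = fromBlocks (fromBlocks Atil 0 0 S₁til) 0 0 S₂til)
    -- ρu is the smallest positive root of u
    (ρu : ℝ)
    (hρumin : ∀ t : ℝ, 0 < t → t < ρu →
      t ^ 3 + (β₁ - α₀) * t ^ 2 - (α₀ * β₁ + α₁ * α₂ / (1 + ηE) + β₀ * β₁) * t
        + α₀ * α₁ * α₂ / (1 + ηE) ≠ 0)
    -- ρv is the largest real root of v
    (ρv : ℝ)
    (hρvmax : ∀ t : ℝ, t ^ 3 - (β₀ + β₂) * t ^ 2
        + (β₀ * β₂ - β₀ * β₁ - β₁ * β₂) * t + 2 * β₀ * β₁ * β₂ = 0 → t ≤ ρv) :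
    ∀ (lam : ℝ) (v : (Fin n ⊕ Fin m) ⊕ Fin p → ℝ), v ≠ 0 →
      K.mulVec v = lam • Mtil.mulVec v → 0 < lam →
      ρu ≤ lam ∧ lam ≤ ρv := by
  intro lam v hv hKv hlam
  subst hK hMtil
  rw [← Sum.elim_comp_inl_inr v, ← Sum.elim_comp_inl_inr (v ∘ Sum.inl)] at hv hKv
  obtain ⟨h₁, h₂, h₃⟩ := eigen_block_rows hKv
  have hpos := add_add_pos_of_sumElim_ne_zero hAtil hS₁til hS₂til hv
  have hρu := smallest_pos_root_le (continuous_lowerCubic α₀ β₀ α₁ β₁ α₂ ηE)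
    (lowerCubic_zero_pos hα₀ hα₁ hα₂ hηE0) hρumin
  have hρv := le_largest_root (continuous_upperCubic β₀ β₁ β₂) (tendsto_upperCubic_atTop β₀ β₁ β₂)
    hρvmax
  have hβ₀' : (0 : ℝ) ≤ β₀ := by linarith
  have hβ₁' : (0 : ℝ) ≤ β₁ := by linarith
  constructor
  · rcases lt_or_ge lam α₀ with h | h
    · exact hρu hlam <| lowerCubic_nonpos_of_eigen hA hD hE hS₁ hS₂ hS₁pd hAtil.posSemidef
        hS₁til.posSemidef (hAequiv · |>.1) (hS₁equiv · |>.1) (hS₂equiv · |>.1) hηE hηE0 hα₁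
        hβ₁' (mul_le_mul (hα₀1.trans hβ₀) (hα₁1.trans hβ₁) hα₁.le hβ₀') h₁ h₂ h₃ hpos hlam h
    · exact (hρu hα₀ (lowerCubic_self_nonpos hα₀.le (mul_nonneg hβ₀' hβ₁'))).trans h
  · rcases le_or_gt lam (max β₀ β₂) with h | h
    · exact h.trans (hρv (upperCubic_max_nonpos hβ₀' hβ₁' (by linarith)))
    · exact hρv <| upperCubic_nonpos_of_eigen hA hD hE hS₁ hS₂ hS₁pd hAtil.posSemidef
        hS₂til.posSemidef (hAequiv · |>.2) (hS₁equiv · |>.2) (hS₂equiv · |>.2) hβ₀' hβ₁'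
        (by linarith) h₁ h₂ h₃ hpos (le_max_left _ _ |>.trans_lt h) (le_max_right _ _ |>.trans_lt h)

/-- Positive eigenvalue bounds for the approximately preconditioned matrix `M̃⁻¹K`:
every positive eigenvalue lies in `[ρ_u, ρ_v]`. -/
theorem stmt_19 (n m p : ℕ) (hp : 0 < p) (hmp : p ≤ m) (hnm : m ≤ n)
    (A : Matrix (Fin n) (Fin n) ℝ) (B : Matrix (Fin m) (Fin n) ℝ)
    (C : Matrix (Fin p) (Fin m) ℝ) (D : Matrix (Fin m) (Fin m) ℝ)
    (E : Matrix (Fin p) (Fin p) ℝ)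
    (hA : A.PosDef) (hD : D.PosSemidef) (hE : E.PosSemidef)
    (hB : B.rank = m) (hC : C.rank = p)
    (S₁ : Matrix (Fin m) (Fin m) ℝ) (hS₁ : S₁ = D + B * A⁻¹ * Bᵀ)
    (S₂ : Matrix (Fin p) (Fin p) ℝ) (hS₂ : S₂ = E + C * S₁⁻¹ * Cᵀ)
    (hS₁pd : S₁.PosDef) (hS₂pd : S₂.PosDef)
    (Atil : Matrix (Fin n) (Fin n) ℝ) (S₁til : Matrix (Fin m) (Fin m) ℝ)
    (S₂til : Matrix (Fin p) (Fin p) ℝ)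
    (hAtil : Atil.PosDef) (hS₁til : S₁til.PosDef) (hS₂til : S₂til.PosDef)
    (α₀ β₀ α₁ β₁ α₂ β₂ : ℝ)
    (hα₀ : 0 < α₀) (hα₀1 : α₀ ≤ 1) (hβ₀ : 1 ≤ β₀)
    (hα₁ : 0 < α₁) (hα₁1 : α₁ ≤ 1) (hβ₁ : 1 ≤ β₁)
    (hα₂ : 0 < α₂) (hα₂1 : α₂ ≤ 1) (hβ₂ : 1 ≤ β₂)
    (hAequiv : ∀ x : Fin n → ℝ,
      α₀ * (x ⬝ᵥ Atil.mulVec x) ≤ x ⬝ᵥ A.mulVec x ∧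
      x ⬝ᵥ A.mulVec x ≤ β₀ * (x ⬝ᵥ Atil.mulVec x))
    (hS₁equiv : ∀ y : Fin m → ℝ,
      α₁ * (y ⬝ᵥ S₁til.mulVec y) ≤ y ⬝ᵥ S₁.mulVec y ∧
      y ⬝ᵥ S₁.mulVec y ≤ β₁ * (y ⬝ᵥ S₁til.mulVec y))
    (hS₂equiv : ∀ z : Fin p → ℝ,
      α₂ * (z ⬝ᵥ S₂til.mulVec z) ≤ z ⬝ᵥ S₂.mulVec z ∧
      z ⬝ᵥ S₂.mulVec z ≤ β₂ * (z ⬝ᵥ S₂til.mulVec z))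
    (ηD : ℝ) (hηD0 : 0 ≤ ηD)
    (hηD : ∀ y : Fin m → ℝ, y ⬝ᵥ D.mulVec y ≤ ηD * (y ⬝ᵥ (B * A⁻¹ * Bᵀ).mulVec y))
    (ηE : ℝ) (hηE0 : 0 ≤ ηE)
    (hηE : ∀ z : Fin p → ℝ, z ⬝ᵥ E.mulVec z ≤ ηE * (z ⬝ᵥ (C * S₁⁻¹ * Cᵀ).mulVec z))
    (K : Matrix ((Fin n ⊕ Fin m) ⊕ Fin p) ((Fin n ⊕ Fin m) ⊕ Fin p) ℝ)
    (hK : K = fromBlocks (fromBlocks A Bᵀ B (-D)) (fromRows 0 Cᵀ) (fromCols 0 C) E)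
    (Mtil : Matrix ((Fin n ⊕ Fin m) ⊕ Fin p) ((Fin n ⊕ Fin m) ⊕ Fin p) ℝ)
    (hMtil : Mtil = fromBlocks (fromBlocks Atil 0 0 S₁til) 0 0 S₂til)
    -- ρu is the smallest positive root of u
    (ρu : ℝ) (hρupos : 0 < ρu)
    (hρu : ρu ^ 3 + (β₁ - α₀) * ρu ^ 2
        - (α₀ * β₁ + α₁ * α₂ / (1 + ηE) + β₀ * β₁) * ρu
        + α₀ * α₁ * α₂ / (1 + ηE) = 0)
    (hρumin : ∀ t : ℝ, 0 < t → t < ρu →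
      t ^ 3 + (β₁ - α₀) * t ^ 2 - (α₀ * β₁ + α₁ * α₂ / (1 + ηE) + β₀ * β₁) * t
        + α₀ * α₁ * α₂ / (1 + ηE) ≠ 0)
    -- ρv is the largest real root of v
    (ρv : ℝ)
    (hρv : ρv ^ 3 - (β₀ + β₂) * ρv ^ 2 + (β₀ * β₂ - β₀ * β₁ - β₁ * β₂) * ρv
        + 2 * β₀ * β₁ * β₂ = 0)
    (hρvmax : ∀ t : ℝ, t ^ 3 - (β₀ + β₂) * t ^ 2
        + (β₀ * β₂ - β₀ * β₁ - β₁ * β₂) * t + 2 * β₀ * β₁ * β₂ = 0 → t ≤ ρv) :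
    ∀ (lam : ℝ) (v : (Fin n ⊕ Fin m) ⊕ Fin p → ℝ), v ≠ 0 →
      K.mulVec v = lam • Mtil.mulVec v → 0 < lam →
      ρu ≤ lam ∧ lam ≤ ρv :=
  stmt_19_general n m p A B C D E hA hD hE S₁ hS₁ S₂ hS₂ hS₁pd Atil S₁til S₂til hAtil hS₁til hS₂til
    α₀ β₀ α₁ β₁ α₂ β₂ hα₀ hα₀1 hβ₀ hα₁ hα₁1 hβ₁ hα₂ hβ₂ hAequiv hS₁equiv hS₂equiv ηE hηE0 hηE K hK
    Mtil hMtil ρu hρumin ρv hρvmax
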